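/- Let V = U ⊕ W be a Lagrangian decomposition with respect to a non-degenerate symmetric bilinear form F. Then the map t ↦ W_t gives a bijection between Λ²U and the set of subspaces W̃ ⊆ V such that V = U ⊕ W̃, W̃ = W̃^⊥, and W̃ is commensurable with W. -/

import Mathlib

open TensorProduct

/-- The linear map `j : U ⊗ U → Hom(W, U)` sending `t = Σ aᵢ ⊗ bᵢ` to `w ↦ Σ F(w, aᵢ) bᵢ`. -/
noncomputable def tensorToHom
    {k V : Type*} [Field k] [AddCommGroup V] [Module k V]
    (F : LinearMap.BilinForm k V) (U W : Submodule k V) :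
    (U ⊗[k] U) →ₗ[k] (W →ₗ[k] U) :=
  (dualTensorHom k W U).comp
    (TensorProduct.map
      ((LinearMap.lcomp k k W.subtype).comp ((LinearMap.flip F).comp U.subtype)) LinearMap.id)

/-- The graph subspace `W_t = { w + f_t(w) | w ∈ W }`. -/
noncomputable def graphSubspace
    {k V : Type*} [Field k] [AddCommGroup V] [Module k V]
    (F : LinearMap.BilinForm k V) (U W : Submodule k V) (t : U ⊗[k] U) :
    Submodule k V :=
  LinearMap.range (W.subtype + U.subtype.comp (tensorToHom F U W t))

/-- Commensurability of two subspaces: `(W' + W'')/(W' ∩ W'')` is finite dimensional. -/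
def Commens {k V : Type*} [Field k] [AddCommGroup V] [Module k V]
    (W' W'' : Submodule k V) : Prop :=
  FiniteDimensional k (↥(W' ⊔ W'') ⧸ Submodule.comap (W' ⊔ W'').subtype (W' ⊓ W''))

/-!
Complements of `U` are exactly the graphs `{w + f w}` of linear maps `f : W → U`. Such a graph
is Lagrangian iff `f` is skew for the pairing `W × U → k` induced by `F`, and it is commensurable
with `W` iff `f` has finite rank. Since `U` and `W` are isotropic and `F` is nondegenerate,
`U → W*` is injective, so `t ↦ f_t` embeds `U ⊗ U` into the finite-rank maps, and the swap
`t ↦ t²¹` becomes the `F`-transpose; hence `Λ²U` lands in the skew maps. Conversely a skew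
finite-rank `f` is some `f_t`: pick `w_j ∈ W` with `F(w_j, ·)` dual to a basis `b_j` of its
range; skewness gives `f = Σ F(·, -f w_j) b_j`.
-/

section Graph

variable {R V : Type*} [Ring R] [AddCommGroup V] [Module R V] {U W : Submodule R V}

-- `graphSubspace F U W t` is by definition `(tensorToHom F U W t).graphIn`.
def LinearMap.graphIn (f : W →ₗ[R] U) : Submodule R V :=
  LinearMap.range (W.subtype + U.subtype ∘ₗ f)

namespace LinearMap

theorem mem_graphIn {f : W →ₗ[R] U} {x : V} :
    x ∈ f.graphIn ↔ ∃ w : W, (w : V) + f w = x :=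
  Iff.rfl

theorem add_apply_mem_graphIn (f : W →ₗ[R] U) (w : W) : (w : V) + f w ∈ f.graphIn :=
  ⟨w, rfl⟩

theorem graphIn_le_sup (f : W →ₗ[R] U) : f.graphIn ≤ W ⊔ (range f).map U.subtype := by
  rintro _ ⟨w, rfl⟩
  exact Submodule.add_mem_sup w.2 ⟨f w, ⟨w, rfl⟩, rfl⟩

theorem map_ker_le_graphIn (f : W →ₗ[R] U) : (ker f).map W.subtype ≤ f.graphIn := by
  rintro _ ⟨w, hw, rfl⟩
  simpa [mem_ker.mp hw] using f.add_apply_mem_graphIn w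

theorem isCompl_graphIn (hUW : IsCompl U W) (f : W →ₗ[R] U) : IsCompl U f.graphIn := by
  constructor
  · rw [Submodule.disjoint_def]
    rintro _ hxU ⟨w, rfl⟩
    have hw : (w : V) ∈ U := by simpa using sub_mem hxU (f w).2
    obtain rfl : w = 0 := Subtype.ext (Submodule.disjoint_def.mp hUW.disjoint _ hw w.2)
    simp
  · rw [codisjoint_iff, eq_top_iff, ← codisjoint_iff.mp hUW.codisjoint, sup_le_iff]
    refine ⟨le_sup_left, fun w hw => ?_⟩
    simpa [sup_comm] using
      Submodule.sub_mem_sup (f.add_apply_mem_graphIn ⟨w, hw⟩) (f ⟨w, hw⟩).2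

theorem graphIn_injective (hUW : Disjoint U W) :
    Function.Injective (graphIn : (W →ₗ[R] U) → Submodule R V) := by
  intro f g hfg
  ext w
  obtain ⟨w', hw'⟩ := mem_graphIn.mp (hfg ▸ f.add_apply_mem_graphIn w)
  have hdiff : ((f w - g w' : U) : V) = ((w' - w : W) : V) := by
    push_cast
    rw [sub_eq_sub_iff_add_eq_add, hw', add_comm]
  have h0 := Submodule.disjoint_def'.mp hUW _ (f w - g w').2 _ (w' - w).2 hdiff
  rw [h0, eq_comm, ZeroMemClass.coe_eq_zero, sub_eq_zero] at hdiff
  subst hdiff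
  simpa [sub_eq_zero] using h0

theorem graphIn_neg_projectionOnto {W' : Submodule R V} (hUW : IsCompl U W)
    (hUW' : IsCompl U W') :
    (-(U.projectionOnto W' hUW' ∘ₗ W.subtype)).graphIn = W' := by
  refine eq_of_le_of_inf_le_of_sup_le (z := U) ?_ ?_ ?_
  · rintro _ ⟨w, rfl⟩
    simp [← sub_eq_add_neg, ← Submodule.projectionOnto_apply_eq_zero_iff hUW',
      Submodule.projectionOnto_projection]
  · simp [hUW'.symm.inf_eq_bot]
  · simp [sup_comm, (isCompl_graphIn hUW _).sup_eq_top]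

end LinearMap

end Graph

section Commensurability

variable {k V : Type*} [Field k] [AddCommGroup V] [Module k V]

theorem commens_of_le_sup {A B D : Submodule k V} [FiniteDimensional k D]
    (h : A ⊔ B ≤ A ⊓ B ⊔ D) : Commens A B := by
  set S := A ⊔ B
  set T := Submodule.comap S.subtype (A ⊓ B)
  refine Module.Finite.of_surjective
    (T.mkQ ∘ₗ Submodule.inclusion (inf_le_right : D ⊓ S ≤ S)) ?_
  rintro ⟨⟨x, hxS⟩⟩
  obtain ⟨a, ha, d, hd, rfl⟩ := Submodule.mem_sup.mp (h hxS)
  have haS : a ∈ S := (inf_le_left.trans le_sup_left : A ⊓ B ≤ S) ha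
  refine ⟨⟨d, hd, by simpa using S.sub_mem hxS haS⟩, (Submodule.Quotient.eq T).mpr ?_⟩
  simpa [T] using (A ⊓ B).neg_mem ha

theorem Commens.finiteDimensional_map {A B : Submodule k V} (h : Commens A B)
    {X : Type*} [AddCommGroup X] [Module k X] (γ : V →ₗ[k] X) (hB : B ≤ LinearMap.ker γ) :
    FiniteDimensional k (A.map γ) := by
  set S := A ⊔ B
  set T := Submodule.comap S.subtype (A ⊓ B)
  have : FiniteDimensional k (S ⧸ T) := h
  have hT : T ≤ LinearMap.ker (γ ∘ₗ S.subtype) := fun x hx => hB (Submodule.mem_inf.mp hx).2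
  refine Submodule.finiteDimensional_of_le (S₂ := LinearMap.range (T.liftQ _ hT)) ?_
  rintro _ ⟨a, ha, rfl⟩
  exact ⟨T.mkQ ⟨a, le_sup_left (b := B) ha⟩, rfl⟩

theorem LinearMap.commens_graphIn_iff {U W : Submodule k V} (hUW : IsCompl U W)
    (f : W →ₗ[k] U) : Commens f.graphIn W ↔ FiniteDimensional k (range f) := by
  constructor
  · intro h
    have hγ : U.projectionOnto W hUW ∘ₗ (W.subtype + U.subtype ∘ₗ f) = f := by
      ext w
      simp
    have := h.finiteDimensional_map _ (Submodule.ker_projectionOnto hUW).ge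
    rwa [graphIn, ← LinearMap.range_comp, hγ] at this
  · intro hf
    obtain ⟨C, hC⟩ := (ker f).exists_isCompl
    have : FiniteDimensional k C :=
      ((Submodule.quotientEquivOfIsCompl _ C hC).symm ≪≫ₗ
        f.quotKerEquivRange).symm.finiteDimensional
    refine commens_of_le_sup (D := C.map W.subtype ⊔ (range f).map U.subtype) ?_
    have hW : W = (ker f).map W.subtype ⊔ C.map W.subtype := by
      rw [← Submodule.map_sup, hC.sup_eq_top, Submodule.map_subtype_top]
    calc f.graphIn ⊔ W ≤ W ⊔ (range f).map U.subtype := sup_le f.graphIn_le_sup le_sup_left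
      _ ≤ f.graphIn ⊓ W ⊔ (C.map W.subtype ⊔ (range f).map U.subtype) := by
        rw [← sup_assoc]
        refine sup_le_sup_right ?_ _
        conv_lhs => rw [hW]
        exact sup_le_sup_right (le_inf f.map_ker_le_graphIn (Submodule.map_subtype_le _ _)) _

end Commensurability

namespace LinearMap.BilinForm

section Lagrangian

variable {R V : Type*} [CommRing R] [AddCommGroup V] [Module R V] (F : LinearMap.BilinForm R V)
  {U W : Submodule R V}

def IsSkewMap (f : W →ₗ[R] U) : Prop :=
  ∀ w w' : W, F w (f w') + F w' (f w) = 0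

variable {F}

theorem flip_domRestrict₁₂_injective (hF : F.SeparatingRight) (hUW : U ⊔ W = ⊤)
    (hU : ∀ u ∈ U, ∀ u' ∈ U, F u u' = 0) :
    Function.Injective (F.domRestrict₁₂ W U).flip := by
  refine (injective_iff_map_eq_zero _).mpr fun a ha => Subtype.ext (hF _ fun v => ?_)
  obtain ⟨u, hu, w, hw, rfl⟩ := Submodule.mem_sup.mp (hUW ▸ Submodule.mem_top : v ∈ U ⊔ W)
  rw [map_add, LinearMap.add_apply, hU u hu a a.2, zero_add]
  exact LinearMap.congr_fun ha ⟨w, hw⟩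

theorem orthogonal_eq_self_of_isotropic (hF : F.SeparatingRight)
    (hU : ∀ u ∈ U, ∀ u' ∈ U, F u u' = 0)
    {W' : Submodule R V} (hUW' : U ⊔ W' = ⊤) (hW' : ∀ x ∈ W', ∀ y ∈ W', F x y = 0) :
    F.orthogonal W' = W' := by
  have hle : W' ≤ F.orthogonal W' := fun y hy x hx => hW' x hx y hy
  refine le_antisymm (fun x hx => ?_) hle
  obtain ⟨u, hu, w, hw, rfl⟩ :=
    Submodule.mem_sup.mp (hUW' ▸ Submodule.mem_top : x ∈ U ⊔ W')
  have hu_orth : u ∈ F.orthogonal W' := by simpa using sub_mem hx (hle hw)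
  obtain rfl : u = 0 := hF u fun v => by
    obtain ⟨u', hu', w', hw', rfl⟩ :=
      Submodule.mem_sup.mp (hUW' ▸ Submodule.mem_top : v ∈ U ⊔ W')
    rw [map_add, LinearMap.add_apply, hU u' hu' u hu, zero_add]
    exact hu_orth w' hw'
  simpa using hw

theorem isotropic_graphIn_iff (hsymm : F.IsSymm) (hU : ∀ u ∈ U, ∀ u' ∈ U, F u u' = 0)
    (hW : ∀ w ∈ W, ∀ w' ∈ W, F w w' = 0) (f : W →ₗ[R] U) :
    (∀ x ∈ f.graphIn, ∀ y ∈ f.graphIn, F x y = 0) ↔ F.IsSkewMap f := by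
  have hpair : ∀ w w' : W, F (w + f w) (w' + f w') = F w (f w') + F w' (f w) := fun w w' => by
    simp only [map_add, LinearMap.add_apply, hW w w.2 w' w'.2, hU (f w) (f w).2 (f w') (f w').2,
      hsymm.eq (f w : V) w']
    ring
  simp only [LinearMap.mem_graphIn, forall_exists_index, forall_apply_eq_imp_iff, hpair,
    IsSkewMap]

end Lagrangian

end LinearMap.BilinForm

theorem Module.Basis.coord_dualTensorHom_apply {R M N ι : Type*} [CommRing R] [AddCommGroup M]
    [Module R M] [AddCommGroup N] [Module R N] [DecidableEq ι] (b : Module.Basis ι R N)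
    (x : Module.Dual R M ⊗[R] N) (i : ι) (m : M) :
    b.coord i (dualTensorHom R M N x m) = equivFinsuppOfBasisRight b x i m := by
  induction x using TensorProduct.induction_on with
  | zero => simp
  | tmul φ n => simp [dualTensorHom_apply, mul_comm]
  | add x y hx hy => simp only [map_add, LinearMap.add_apply, Finsupp.add_apply, hx, hy]

theorem dualTensorHom_injective {R M N : Type*} [CommRing R] [AddCommGroup M] [Module R M]
    [AddCommGroup N] [Module R N] [Module.Free R N] :
    Function.Injective (dualTensorHom R M N) := by
  classical
  let b := Module.Free.chooseBasis R N
  refine (injective_iff_map_eq_zero _).mpr fun x hx =>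
    (TensorProduct.equivFinsuppOfBasisRight b).map_eq_zero_iff.mp ?_
  ext i m
  simpa [hx] using (b.coord_dualTensorHom_apply x i m).symm

theorem finiteDimensional_range_dualTensorHom {k M N : Type*} [Field k] [AddCommGroup M]
    [Module k M] [AddCommGroup N] [Module k N] (x : Module.Dual k M ⊗[k] N) :
    FiniteDimensional k (LinearMap.range (dualTensorHom k M N x)) := by
  induction x using TensorProduct.induction_on with
  | zero =>
    rw [map_zero, LinearMap.range_zero]
    infer_instance
  | tmul φ n =>
    refine Submodule.finiteDimensional_of_le (S₂ := k ∙ n) ?_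
    rintro _ ⟨m, rfl⟩
    exact Submodule.smul_mem _ _ (Submodule.mem_span_singleton_self n)
  | add x y hx hy =>
    refine Submodule.finiteDimensional_of_le (S₂ := LinearMap.range (dualTensorHom k M N x) ⊔
      LinearMap.range (dualTensorHom k M N y)) ?_
    rintro _ ⟨m, rfl⟩
    rw [map_add, LinearMap.add_apply]
    exact Submodule.add_mem_sup (LinearMap.mem_range_self (dualTensorHom k M N x) m)
      (LinearMap.mem_range_self (dualTensorHom k M N y) m)

section TensorToHom

variable {k V : Type*} [Field k] [AddCommGroup V] [Module k V] {F : LinearMap.BilinForm k V}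
  {U W : Submodule k V}

theorem tensorToHom_eq_dualTensorHom_comp :
    tensorToHom F U W = dualTensorHom k W U ∘ₗ (F.domRestrict₁₂ W U).flip.rTensor U :=
  rfl

theorem tensorToHom_tmul (a b : U) (w : W) : tensorToHom F U W (a ⊗ₜ[k] b) w = F w a • b := by
  simp [tensorToHom]

theorem tensorToHom_injective (hι : Function.Injective (F.domRestrict₁₂ W U).flip) :
    Function.Injective (tensorToHom F U W) := by
  rw [tensorToHom_eq_dualTensorHom_comp]
  exact dualTensorHom_injective.comp (Module.Flat.rTensor_preserves_injective_linearMap _ hι)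

theorem apply_tensorToHom_comm (s : U ⊗[k] U) (w w' : W) :
    F w (tensorToHom F U W s w') = F w' (tensorToHom F U W (TensorProduct.comm k U U s) w) := by
  induction s using TensorProduct.induction_on with
  | zero => simp
  | tmul a b => simp [tensorToHom_tmul, mul_comm]
  | add x y hx hy => simp [hx, hy]

theorem add_comm_eq_zero_iff_isSkewMap (hι : Function.Injective (F.domRestrict₁₂ W U).flip)
    (t : U ⊗[k] U) :
    t + TensorProduct.comm k U U t = 0 ↔ F.IsSkewMap (tensorToHom F U W t) := by
  have hsum : ∀ w w' : W, F w' (tensorToHom F U W (t + TensorProduct.comm k U U t) w) =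
      F w (tensorToHom F U W t w') + F w' (tensorToHom F U W t w) := fun w w' => by
    rw [map_add, LinearMap.add_apply, Submodule.coe_add, map_add, ← apply_tensorToHom_comm,
      add_comm]
  have hzero : ∀ a : U, a = 0 ↔ ∀ w : W, F w a = 0 := fun a => by
    rw [← hι.eq_iff' (map_zero _), LinearMap.ext_iff]
    rfl
  rw [← (tensorToHom_injective hι).eq_iff, map_zero, LinearMap.ext_iff]
  simp only [LinearMap.zero_apply, hzero, hsum]
  rfl

theorem exists_tensorToHom_eq (hι : Function.Injective (F.domRestrict₁₂ W U).flip)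
    (f : W →ₗ[k] U) [FiniteDimensional k (LinearMap.range f)] (hf : F.IsSkewMap f) :
    ∃ t, tensorToHom F U W t = f := by
  -- dual to the injectivity of `U → W*`, since `range f` is finite-dimensional
  have hP : Function.Surjective ((F.domRestrict₁₂ W U).compl₂ (LinearMap.range f).subtype) :=
    LinearMap.flip_injective_iff₂.mp (hι.comp Subtype.val_injective)
  let b := Module.finBasis k (LinearMap.range f)
  choose w hw using fun j => hP (b.coord j)
  refine ⟨∑ j, (-f (w j)) ⊗ₜ[k] (b j : U), LinearMap.ext fun w₀ => ?_⟩
  have hcoord : ∀ j, F w₀ (-f (w j) : U) = b.coord j (f.rangeRestrict w₀) := fun j => by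
    rw [← hw j, Submodule.coe_neg, map_neg]
    exact neg_eq_of_add_eq_zero_right (hf w₀ (w j))
  calc tensorToHom F U W (∑ j, (-f (w j)) ⊗ₜ[k] (b j : U)) w₀
      = ((∑ j, b.coord j (f.rangeRestrict w₀) • b j : LinearMap.range f) : U) := by
        simp only [map_sum, LinearMap.sum_apply, tensorToHom_tmul, hcoord]
        push_cast
        rfl
    _ = f w₀ := by simp only [Module.Basis.coord_apply, b.sum_repr]; rfl

end TensorToHom

theorem graphSubspace_bijOn_general
    {k V : Type*} [Field k] [AddCommGroup V] [Module k V]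
    (F : LinearMap.BilinForm k V) (hsymm : F.IsSymm) (hnd : F.Nondegenerate)
    (U W : Submodule k V) (hUW : IsCompl U W)
    (hU : ∀ u ∈ U, ∀ u' ∈ U, F u u' = 0)
    (hW : ∀ w ∈ W, ∀ w' ∈ W, F w w' = 0) :
    Set.BijOn (graphSubspace F U W)
      {t : U ⊗[k] U | t + (TensorProduct.comm k U U) t = 0}
      {W' : Submodule k V | IsCompl U W' ∧ W' = F.orthogonal W' ∧ Commens W' W} := by
  have hι := LinearMap.BilinForm.flip_domRestrict₁₂_injective hnd.2 hUW.sup_eq_top hU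
  have hJ := tensorToHom_injective hι
  refine ⟨fun t ht => ?_, fun t _ s _ hts => hJ (LinearMap.graphIn_injective hUW.disjoint hts),
    fun W' ⟨hUW', horth, hcomm⟩ => ?_⟩
  · have hcompl := (tensorToHom F U W t).isCompl_graphIn hUW
    have hiso := (F.isotropic_graphIn_iff hsymm hU hW _).mpr
      ((add_comm_eq_zero_iff_isSkewMap hι t).mp ht)
    have : FiniteDimensional k (LinearMap.range (tensorToHom F U W t)) :=
      finiteDimensional_range_dualTensorHom _
    exact ⟨hcompl, (F.orthogonal_eq_self_of_isotropic hnd.2 hU hcompl.sup_eq_top hiso).symm,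
      ((tensorToHom F U W t).commens_graphIn_iff hUW).mpr this⟩
  · obtain ⟨f, hf⟩ : ∃ f : W →ₗ[k] U, f.graphIn = W' :=
      ⟨_, LinearMap.graphIn_neg_projectionOnto hUW hUW'⟩
    have hskew : F.IsSkewMap f := (F.isotropic_graphIn_iff hsymm hU hW f).mp fun x hx y hy =>
      (horth ▸ hf ▸ hy : y ∈ F.orthogonal W') x (hf ▸ hx)
    have := (f.commens_graphIn_iff hUW).mp (hf ▸ hcomm)
    obtain ⟨t, rfl⟩ := exists_tensorToHom_eq hι f hskew
    exact ⟨t, (add_comm_eq_zero_iff_isSkewMap hι t).mpr hskew, hf⟩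

/-- For a Lagrangian decomposition `V = U ⊕ W`, the assignment `t ↦ W_t`
is a bijection from `Λ²U = {t | t + t²¹ = 0}` onto the set of subspaces `W̃` with
`V = U ⊕ W̃`, `W̃ = W̃^⊥` and `W̃` commensurable with `W`. -/
theorem graphSubspace_bijOn
    {k V : Type*} [Field k] [AddCommGroup V] [Module k V]
    (hchar : (2 : k) ≠ 0)
    (F : LinearMap.BilinForm k V) (hsymm : F.IsSymm) (hnd : F.Nondegenerate)
    (U W : Submodule k V) (hUW : IsCompl U W)
    (hU : ∀ u ∈ U, ∀ u' ∈ U, F u u' = 0)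
    (hW : ∀ w ∈ W, ∀ w' ∈ W, F w w' = 0) :
    Set.BijOn (graphSubspace F U W)
      {t : U ⊗[k] U | t + (TensorProduct.comm k U U) t = 0}
      {W' : Submodule k V | IsCompl U W' ∧ W' = F.orthogonal W' ∧ Commens W' W} :=
  graphSubspace_bijOn_general F hsymm hnd U W hUW hU hW
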